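/- arXiv:2305.09901 — 4 statements merged into one kernel-verified Lean document; each statement's English description precedes it below -/
import Mathlib

section
/- Let g : Fin h → ℝ^n be generators, let E : Fin r → Fin h → ℕ be an exponent matrix, and fix a split index s : Fin r. Define PZ = { ∑_i (∏_k (α k)^{E k i}) • g i | α : Fin r → ℝ, α k ∈ [-1,1] for all k }, PZ₁ = { ∑_i (∏_{k ≠ s} (α k)^{E k i}) · ((1 + α s)/2)^{E s i} • g i | α : Fin r → ℝ, α k ∈ [-1,1] for all k }, and PZ₂ = { ∑_i (∏_{k ≠ s} (α k)^{E k i}) · (-(1 + α s)/2)^{E s i} • g i | α : Fin r → ℝ, α k ∈ [-1,1] for all k }. Then PZ = PZ₁ ∪ PZ₂. -/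
/-!
Writing `α s = (1 + t) / 2` and `α s = -(1 + t) / 2` with `t ∈ [-1, 1]` sweeps out exactly
`α s ∈ [0, 1]` and `α s ∈ [-1, 0]`, whose union is `[-1, 1]`; the other factors are untouched.
So both sides are the image of the same box under the polynomial map of the zonotope.
-/

open Function Set

section Box

variable {κ X : Type*}

theorem setOf_exists_univ_pi_eq_image {Y : Type*} (S : κ → Set X) (G : (κ → X) → Y) :
    {y | ∃ a : κ → X, (∀ k, a k ∈ S k) ∧ y = G a} = G '' univ.pi S := by
  ext y
  simp only [mem_ofPred_eq, mem_image, mem_univ_pi, eq_comm]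

variable [DecidableEq κ]

theorem image_update_apply_univ_pi (S : κ → Set X) (s : κ) (φ : X → X) :
    (fun a => update a s (φ (a s))) '' univ.pi S = univ.pi (update S s (φ '' S s)) := by
  ext b
  simp only [mem_image, mem_univ_pi]
  constructor
  · rintro ⟨a, ha, rfl⟩ k
    rcases eq_or_ne k s with rfl | hk
    · simpa using mem_image_of_mem φ (ha k)
    · simpa [hk] using ha k
  · intro hb
    obtain ⟨x, hx, hφx⟩ : b s ∈ φ '' S s := by simpa using hb s
    refine ⟨update b s x, fun k => ?_, by simp [hφx]⟩
    rcases eq_or_ne k s with rfl | hk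
    · simpa using hx
    · simpa [hk] using hb k

theorem univ_pi_update_union (S : κ → Set X) (s : κ) (A B : Set X) :
    univ.pi (update S s A) ∪ univ.pi (update S s B) = univ.pi (update S s (A ∪ B)) := by
  simp only [univ_pi_update s S _ (fun _ t => t), ← union_inter_distrib_right]
  rfl

end Box

section Interval

variable {K : Type*} [Field K] [LinearOrder K] [IsStrictOrderedRing K]

theorem image_one_add_div_two_Icc :
    (fun t : K => (1 + t) / 2) '' Icc (-1) 1 = Icc 0 1 := by
  ext x
  constructor
  · rintro ⟨t, ⟨ht₁, ht₂⟩, rfl⟩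
    constructor <;> linarith
  · rintro ⟨hx₁, hx₂⟩
    exact ⟨2 * x - 1, ⟨by linarith, by linarith⟩, by ring⟩

theorem image_neg_one_add_div_two_Icc :
    (fun t : K => -(1 + t) / 2) '' Icc (-1) 1 = Icc (-1) 0 := by
  ext x
  constructor
  · rintro ⟨t, ⟨ht₁, ht₂⟩, rfl⟩
    constructor <;> linarith
  · rintro ⟨hx₁, hx₂⟩
    exact ⟨-2 * x - 1, ⟨by linarith, by linarith⟩, by ring⟩

end Interval

section PolyZonotope

variable {R M ι κ : Type*} [CommRing R] [AddCommMonoid M] [Module R M] [Fintype ι] [Fintype κ]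

/-- The polynomial map `α ↦ ∑ i, (∏ k, α k ^ E k i) • g i` whose image of the box `[-1, 1]ᵏ`
is the dependent part of a polynomial zonotope. -/
def polyZonotopeMap (g : ι → M) (E : κ → ι → ℕ) (α : κ → R) : M :=
  ∑ i, (∏ k, α k ^ E k i) • g i

theorem polyZonotopeMap_update [DecidableEq κ] (g : ι → M) (E : κ → ι → ℕ) (α : κ → R)
    (s : κ) (c : R) :
    polyZonotopeMap g E (update α s c)
      = ∑ i, ((∏ k ∈ Finset.univ.erase s, α k ^ E k i) * c ^ E s i) • g i := by
  refine Finset.sum_congr rfl fun i _ => ?_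
  rw [← Finset.prod_erase_mul _ _ (Finset.mem_univ s), update_self]
  congr 2
  exact Finset.prod_congr rfl fun k hk => by rw [update_of_ne (Finset.ne_of_mem_erase hk)]

end PolyZonotope

/-- Splitting a (dependent part of a) polynomial zonotope at factor index `s`:
the set `PZ` equals the union `PZ₁ ∪ PZ₂` obtained by substituting `(1 + α s)/2`
and `-(1 + α s)/2` for the factor `α s`. -/
theorem polyZonotope_split {n h r : ℕ} (g : Fin h → (Fin n → ℝ))
    (E : Fin r → Fin h → ℕ) (s : Fin r) :
    { v : Fin n → ℝ | ∃ α : Fin r → ℝ, (∀ k, α k ∈ Set.Icc (-1 : ℝ) 1) ∧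
        v = ∑ i, (∏ k, (α k) ^ (E k i)) • g i }
    = { v : Fin n → ℝ | ∃ α : Fin r → ℝ, (∀ k, α k ∈ Set.Icc (-1 : ℝ) 1) ∧
          v = ∑ i, ((∏ k ∈ Finset.univ.erase s, (α k) ^ (E k i))
                * ((1 + α s) / 2) ^ (E s i)) • g i }
      ∪ { v : Fin n → ℝ | ∃ α : Fin r → ℝ, (∀ k, α k ∈ Set.Icc (-1 : ℝ) 1) ∧
          v = ∑ i, ((∏ k ∈ Finset.univ.erase s, (α k) ^ (E k i))
                * (-(1 + α s) / 2) ^ (E s i)) • g i } := by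
  set box : Fin r → Set ℝ := fun _ => Icc (-1) 1
  have substitute (φ : ℝ → ℝ) :
      {v | ∃ α : Fin r → ℝ, (∀ k, α k ∈ box k) ∧
          v = ∑ i, ((∏ k ∈ Finset.univ.erase s, α k ^ E k i) * φ (α s) ^ E s i) • g i}
        = polyZonotopeMap g E '' univ.pi (update box s (φ '' Icc (-1) 1)) := by
    simp only [← polyZonotopeMap_update, setOf_exists_univ_pi_eq_image]
    rw [← image_update_apply_univ_pi, image_image]
  rw [substitute (fun t => (1 + t) / 2), substitute (fun t => -(1 + t) / 2),
    image_one_add_div_two_Icc, image_neg_one_add_div_two_Icc, ← image_union,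
    univ_pi_update_union, union_comm, Icc_union_Icc_eq_Icc (by norm_num) (by norm_num),
    update_eq_self]
  exact setOf_exists_univ_pi_eq_image box (polyZonotopeMap g E)
end

section
/- The set { α² | α ∈ [-1,1] } equals the interval [0,1]; the set { (1/4)·(3/2 + (1/2)·β₁ + 2·β₂) | β₁, β₂ ∈ [-1,1] } equals the interval [-1/4, 1]; and [0,1] is a strict subset of [-1/4, 1]. In particular, the zonotope overapproximation of the polynomial zonotope { α² | α ∈ [-1,1] } equals [0,1], while the union of the zonotope overapproximations of the two polynomial zonotopes obtained by splitting it equals [-1/4, 1], so the overapproximation error strictly increases after splitting. -/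
open Set

theorem setOf_sq_of_mem_Icc_neg {a : ℝ} (ha : 0 ≤ a) :
    {y : ℝ | ∃ α ∈ Icc (-a) a, y = α ^ 2} = Icc 0 (a ^ 2) := by
  ext y
  constructor
  · rintro ⟨α, ⟨hα_lo, hα_hi⟩, rfl⟩
    exact ⟨sq_nonneg α, sq_le_sq' hα_lo hα_hi⟩
  · rintro ⟨hy_nonneg, hy_le⟩
    have hsqrt_le : √y ≤ a := Real.sqrt_le_iff.mpr ⟨ha, hy_le⟩
    exact ⟨√y, ⟨by linarith [Real.sqrt_nonneg y], hsqrt_le⟩, (Real.sq_sqrt hy_nonneg).symm⟩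

theorem setOf_add_mul_add_mul_of_mem_Icc {a b : ℝ} (c : ℝ) (ha : 0 ≤ a) (hb : 0 ≤ b) :
    {y : ℝ | ∃ β₁ ∈ Icc (-1 : ℝ) 1, ∃ β₂ ∈ Icc (-1 : ℝ) 1, y = c + a * β₁ + b * β₂} =
      Icc (c - (a + b)) (c + (a + b)) := by
  ext y
  constructor
  · rintro ⟨β₁, ⟨h₁_lo, h₁_hi⟩, β₂, ⟨h₂_lo, h₂_hi⟩, rfl⟩
    constructor <;> nlinarith
  · rintro ⟨hy_lo, hy_hi⟩
    rcases (add_nonneg ha hb).eq_or_lt with hab | hab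
    · have hyc : y = c := by linarith
      exact ⟨0, by norm_num, 0, by norm_num, by simp [hyc]⟩
    -- the diagonal `β₁ = β₂ = t` already sweeps the whole interval
    set t := (y - c) / (a + b) with ht
    have ht_mem : t ∈ Icc (-1 : ℝ) 1 := by
      rw [mem_Icc, ht, le_div_iff₀ hab, div_le_iff₀ hab]
      constructor <;> linarith
    refine ⟨t, ht_mem, t, ht_mem, ?_⟩
    rw [ht]
    field_simp
    ring

/-- The polynomial zonotope `{ α² | α ∈ [-1,1] }` equals `[0,1]` (which is also its
zonotope overapproximation), the union of the zonotope overapproximations of its two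
split pieces is `{ (1/4)(3/2 + (1/2)β₁ + 2β₂) | β₁, β₂ ∈ [-1,1] } = [-1/4, 1]`, and
`[0,1] ⊂ [-1/4,1]`: the overapproximation error strictly increases after splitting. -/
theorem split_overapproximation_increases :
    { y : ℝ | ∃ α ∈ Set.Icc (-1 : ℝ) 1, y = α ^ 2 } = Set.Icc (0 : ℝ) 1 ∧
    { y : ℝ | ∃ β₁ ∈ Set.Icc (-1 : ℝ) 1, ∃ β₂ ∈ Set.Icc (-1 : ℝ) 1,
        y = (1 / 4) * (3 / 2 + (1 / 2) * β₁ + 2 * β₂) } = Set.Icc (-(1 / 4) : ℝ) 1 ∧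
    Set.Icc (0 : ℝ) 1 ⊂ Set.Icc (-(1 / 4) : ℝ) 1 := by
  refine ⟨?_, ?_, Icc_ssubset_Icc_left (by norm_num) (by norm_num) le_rfl⟩
  · simpa only [one_pow] using setOf_sq_of_mem_Icc_neg (zero_le_one' ℝ)
  · have hexpand : ∀ β₁ β₂ : ℝ,
        (1 / 4) * (3 / 2 + (1 / 2) * β₁ + 2 * β₂) = 3 / 8 + 1 / 8 * β₁ + 1 / 2 * β₂ := by
      intros; ring
    simp only [hexpand]
    rw [setOf_add_mul_add_mul_of_mem_Icc _ (by norm_num) (by norm_num)]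
    norm_num
end

section
/- Let V be a real normed vector space, c ∈ V, g : Fin h → V, u : Fin q → V, and E : Fin r → Fin h → ℕ. Let H = { i | E k i is even for all k } and K its complement. Define PZ = { c + ∑_i (∏_k (α k)^{E k i}) • g i + ∑_j (β j) • u j | α k ∈ [-1,1], β j ∈ [-1,1] } and its zonotope overapproximation Z = { c + ∑_{i ∈ K} (γ i) • g i + ∑_{i ∈ H} ((γ i + 1)/2) • g i + ∑_j (β j) • u j | γ i ∈ [-1,1], β j ∈ [-1,1] }. Then PZ ⊆ Z. -/
/-- A polynomial zonotope is contained in its zonotope overapproximation, obtained by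
replacing each dependent product `∏ k, (α k)^(E k i)` by a fresh factor `γ i ∈ [-1,1]`,
refined to `(γ i + 1)/2 ∈ [0,1]` when all exponents in column `i` are even. -/
theorem polyZonotope_subset_zonotopeApprox {V : Type*} [NormedAddCommGroup V]
    [NormedSpace ℝ V] {h q r : ℕ} (c : V) (g : Fin h → V) (u : Fin q → V)
    (E : Fin r → Fin h → ℕ) :
    { v : V | ∃ α : Fin r → ℝ, ∃ β : Fin q → ℝ,
        (∀ k, α k ∈ Set.Icc (-1 : ℝ) 1) ∧ (∀ j, β j ∈ Set.Icc (-1 : ℝ) 1) ∧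
        v = c + ∑ i, (∏ k, (α k) ^ (E k i)) • g i + ∑ j, (β j) • u j }
    ⊆ { v : V | ∃ γ : Fin h → ℝ, ∃ β : Fin q → ℝ,
        (∀ i, γ i ∈ Set.Icc (-1 : ℝ) 1) ∧ (∀ j, β j ∈ Set.Icc (-1 : ℝ) 1) ∧
        v = c + ∑ i ∈ Finset.univ.filter (fun i => ¬ (∀ k, Even (E k i))), (γ i) • g i
              + ∑ i ∈ Finset.univ.filter (fun i => ∀ k, Even (E k i)),
                  ((γ i + 1) / 2) • g i
              + ∑ j, (β j) • u j } := by
  rintro v ⟨α, β, hα, hβ, rfl⟩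
  set p : Fin h → ℝ := fun i => ∏ k, (α k) ^ (E k i) with hp
  have hp1 : ∀ i, |p i| ≤ 1 := by
    intro i
    rw [hp]
    simp only
    rw [Finset.abs_prod]
    apply Finset.prod_le_one
    · intro k _; positivity
    · intro k _
      rw [abs_pow]
      exact pow_le_one₀ (abs_nonneg _) (abs_le.mpr (hα k))
  classical
  refine ⟨fun i => if ∀ k, Even (E k i) then 2 * p i - 1 else p i, β, ?_, hβ, ?_⟩
  · intro i
    by_cases hi : ∀ k, Even (E k i) <;> dsimp only <;> simp only [Set.mem_Icc]
    · rw [if_pos hi]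
      have hnn : 0 ≤ p i := Finset.prod_nonneg fun k _ => (hi k).pow_nonneg _
      have h2 := abs_le.mp (hp1 i)
      constructor <;> nlinarith [h2.1, h2.2]
    · rw [if_neg hi]
      exact abs_le.mp (hp1 i)
  · have hsum : (∑ i, p i • g i) =
        (∑ i ∈ Finset.univ.filter (fun i => ¬ (∀ k, Even (E k i))),
          (if ∀ k, Even (E k i) then 2 * p i - 1 else p i) • g i)
        + ∑ i ∈ Finset.univ.filter (fun i => ∀ k, Even (E k i)),
          (((if ∀ k, Even (E k i) then 2 * p i - 1 else p i) + 1) / 2) • g i := by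
      rw [← Finset.sum_filter_add_sum_filter_not Finset.univ (fun i => ∀ k, Even (E k i)),
        add_comm]
      congr 1
      · exact Finset.sum_congr rfl fun i hi => by
          simp only [Finset.mem_filter] at hi
          rw [if_neg hi.2]
      · refine Finset.sum_congr rfl fun i hi => ?_
        simp only [Finset.mem_filter] at hi
        rw [if_pos hi.2]
        ring_nf
    rw [hsum, ← add_assoc]
end

section
/- Let V be a real normed vector space, c ∈ V, g : Fin h → V, u : Fin q → V, and E : Fin r → Fin h → ℕ. Let H = { i | E k i is even for all k } and K its complement. Define PZ = { c + ∑_i (∏_k (α k)^{E k i}) • g i + ∑_j (β j) • u j | α k ∈ [-1,1], β j ∈ [-1,1] } and Z = { c + ∑_{i ∈ K} (γ i) • g i + ∑_{i ∈ H} ((γ i + 1)/2) • g i + ∑_j (β j) • u j | γ i ∈ [-1,1], β j ∈ [-1,1] }. Then the Hausdorff distance between PZ and Z is at most ∑_i ‖g i‖. -/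
/-!
Every monomial `∏ k, α k ^ E k i` over the box lies in `[-1, 1]`, and in `[0, 1]` when all its
exponents are even, which is exactly the range of the zonotope coefficient of `g i`; so the
polynomial zonotope is contained in the zonotope. Conversely, the point of the polynomial zonotope
with `α = 0` and the same `β` has coefficient `0` on every column with an odd exponent and a
coefficient in `[0, 1]` on every other column, so it differs from any point of the zonotope by
`∑ i, d i • g i` with `|d i| ≤ 1`.
-/

open Finset

section Monomial

variable {κ : Type*} [Fintype κ]

theorem abs_prod_pow_le_one {α : κ → ℝ} (hα : ∀ k, α k ∈ Set.Icc (-1 : ℝ) 1)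
    (e : κ → ℕ) :
    |∏ k, α k ^ e k| ≤ 1 := by
  rw [abs_prod]
  exact prod_le_one (fun k _ => abs_nonneg _) fun k _ => by
    rw [abs_pow]
    exact pow_le_one₀ (abs_nonneg _) (abs_le.2 (hα k))

theorem prod_pow_nonneg_of_forall_even (α : κ → ℝ) {e : κ → ℕ} (he : ∀ k, Even (e k)) :
    0 ≤ ∏ k, α k ^ e k :=
  prod_nonneg fun k _ => (he k).pow_nonneg _

theorem prod_zero_pow_mem_Icc (e : κ → ℕ) : ∏ k, (0 : ℝ) ^ e k ∈ Set.Icc (0 : ℝ) 1 :=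
  ⟨prod_nonneg fun _ _ => pow_nonneg le_rfl _,
    prod_le_one (fun _ _ => pow_nonneg le_rfl _) fun _ _ => pow_le_one₀ le_rfl zero_le_one⟩

theorem prod_zero_pow_eq_zero_of_not_forall_even {e : κ → ℕ} (he : ¬ ∀ k, Even (e k)) :
    ∏ k, (0 : ℝ) ^ e k = 0 := by
  obtain ⟨k, hk⟩ := not_forall.1 he
  exact prod_eq_zero (mem_univ k) (zero_pow fun h0 => hk (h0 ▸ Even.zero))

end Monomial

section Zonotope

variable {ι V : Type*} [SeminormedAddCommGroup V] [NormedSpace ℝ V]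
  (p : ι → Prop) [DecidablePred p]

theorem norm_sum_smul_le_sum_norm [Fintype ι] {a : ι → ℝ} (ha : ∀ i, |a i| ≤ 1)
    (g : ι → V) :
    ‖∑ i, a i • g i‖ ≤ ∑ i, ‖g i‖ :=
  (norm_sum_le _ _).trans <| sum_le_sum fun i _ => by
    rw [norm_smul, Real.norm_eq_abs]
    exact mul_le_of_le_one_left (norm_nonneg _) (ha i)

theorem dist_add_sum_smul_add_le [Fintype ι] (c w : V) (g : ι → V) {a b : ι → ℝ}
    (hab : ∀ i, |a i - b i| ≤ 1) :
    dist (c + ∑ i, a i • g i + w) (c + ∑ i, b i • g i + w) ≤ ∑ i, ‖g i‖ := by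
  rw [dist_eq_norm, add_sub_add_right_eq_sub, add_sub_add_left_eq_sub, ← sum_sub_distrib]
  simp_rw [← sub_smul]
  exact norm_sum_smul_le_sum_norm hab g

noncomputable def zonotopeCoeff (γ : ι → ℝ) (i : ι) : ℝ :=
  if p i then (γ i + 1) / 2 else γ i

theorem sum_filter_not_add_sum_filter_eq_sum_zonotopeCoeff [Fintype ι] (γ : ι → ℝ)
    (g : ι → V) :
    ∑ i ∈ univ.filter (fun i => ¬ p i), γ i • g i
        + ∑ i ∈ univ.filter p, ((γ i + 1) / 2) • g i
      = ∑ i, zonotopeCoeff p γ i • g i := by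
  simp_rw [zonotopeCoeff, ite_smul]
  rw [sum_ite, add_comm]

theorem exists_zonotopeCoeff_eq {s : ι → ℝ} (hs : ∀ i, |s i| ≤ 1)
    (hs₀ : ∀ i, p i → 0 ≤ s i) :
    ∃ γ : ι → ℝ, (∀ i, γ i ∈ Set.Icc (-1 : ℝ) 1) ∧ zonotopeCoeff p γ = s := by
  refine ⟨fun i => if p i then 2 * s i - 1 else s i, fun i => ?_, funext fun i => ?_⟩
  · obtain ⟨hs₁, hs₂⟩ := abs_le.1 (hs i)
    by_cases hi : p i
    · have := hs₀ i hi
      simp only [if_pos hi, Set.mem_Icc]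
      constructor <;> linarith
    · simpa only [if_neg hi, Set.mem_Icc] using And.intro hs₁ hs₂
  · by_cases hi : p i
    · simp only [zonotopeCoeff, if_pos hi]
      ring
    · simp only [zonotopeCoeff, if_neg hi]

theorem abs_sub_zonotopeCoeff_le_one {γ : ι → ℝ} (hγ : ∀ i, γ i ∈ Set.Icc (-1 : ℝ) 1)
    {t : ι → ℝ} (ht : ∀ i, t i ∈ Set.Icc (0 : ℝ) 1) (ht₀ : ∀ i, ¬ p i → t i = 0) (i : ι) :
    |t i - zonotopeCoeff p γ i| ≤ 1 := by
  obtain ⟨hγ₁, hγ₂⟩ := hγ i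
  by_cases hi : p i
  · obtain ⟨ht₁, ht₂⟩ := ht i
    rw [zonotopeCoeff, if_pos hi, abs_le]
    constructor <;> linarith
  · rw [zonotopeCoeff, if_neg hi, ht₀ i hi, zero_sub, abs_neg]
    exact abs_le.2 ⟨hγ₁, hγ₂⟩

end Zonotope

/-- The Hausdorff distance between a polynomial zonotope and its zonotope
overapproximation is bounded by the sum of the norms of the dependent generators. -/
theorem hausdorffDist_polyZonotope_zonotopeApprox_le {V : Type*} [NormedAddCommGroup V]
    [NormedSpace ℝ V] {h q r : ℕ} (c : V) (g : Fin h → V) (u : Fin q → V)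
    (E : Fin r → Fin h → ℕ) :
    Metric.hausdorffDist
      { v : V | ∃ α : Fin r → ℝ, ∃ β : Fin q → ℝ,
          (∀ k, α k ∈ Set.Icc (-1 : ℝ) 1) ∧ (∀ j, β j ∈ Set.Icc (-1 : ℝ) 1) ∧
          v = c + ∑ i, (∏ k, (α k) ^ (E k i)) • g i + ∑ j, (β j) • u j }
      { v : V | ∃ γ : Fin h → ℝ, ∃ β : Fin q → ℝ,
          (∀ i, γ i ∈ Set.Icc (-1 : ℝ) 1) ∧ (∀ j, β j ∈ Set.Icc (-1 : ℝ) 1) ∧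
          v = c + ∑ i ∈ Finset.univ.filter (fun i => ¬ (∀ k, Even (E k i))), (γ i) • g i
                + ∑ i ∈ Finset.univ.filter (fun i => ∀ k, Even (E k i)),
                    ((γ i + 1) / 2) • g i
                + ∑ j, (β j) • u j }
      ≤ ∑ i, ‖g i‖ := by
  have hR : 0 ≤ ∑ i, ‖g i‖ := sum_nonneg fun i _ => norm_nonneg _
  refine Metric.hausdorffDist_le_of_mem_dist hR ?_ ?_
  · rintro _ ⟨α, β, hα, hβ, rfl⟩
    obtain ⟨γ, hγ, hγα⟩ := exists_zonotopeCoeff_eq (fun i => ∀ k, Even (E k i))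
      (fun i => abs_prod_pow_le_one hα (E · i)) fun i => prod_pow_nonneg_of_forall_even α
    refine ⟨_, ⟨γ, β, hγ, hβ, rfl⟩, ?_⟩
    rw [add_assoc c (∑ i ∈ univ.filter fun i => ¬ _, _),
      sum_filter_not_add_sum_filter_eq_sum_zonotopeCoeff, hγα, dist_self]
    exact hR
  · rintro _ ⟨γ, β, hγ, hβ, rfl⟩
    refine ⟨_, ⟨0, β, fun _ => ⟨by norm_num, by norm_num⟩, hβ, rfl⟩, ?_⟩
    rw [add_assoc c (∑ i ∈ univ.filter fun i => ¬ _, _),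
      sum_filter_not_add_sum_filter_eq_sum_zonotopeCoeff, dist_comm]
    exact dist_add_sum_smul_add_le c _ g <| abs_sub_zonotopeCoeff_le_one _ hγ
      (fun i => prod_zero_pow_mem_Icc (E · i)) fun i => prod_zero_pow_eq_zero_of_not_forall_even
end
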